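/- Let ℰ be a ∩-stable generator of 𝒮 and let π₁, π₂ : Ω → C(S) be countable random sets that are σ-finite on ℰ. If P(N_{A₁}(π₁)=k₁, …, N_{Aₙ}(π₁)=kₙ) = P(N_{A₁}(π₂)=k₁, …, N_{Aₙ}(π₂)=kₙ) for all n ∈ ℕ, A₁,…,Aₙ ∈ ℰ and k₁,…,kₙ ∈ ℕ₀ ∪ {∞}, then π₁ and π₂ have the same law on (C(S), 𝒞(𝒮)). -/

import Mathlib

open MeasureTheory Filter

/-- The space of countable subsets of `S`. -/
def CS (S : Type*) : Type _ := {M : Set S // M.Countable}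

/-- The counting map `N_A : C(S) → ℕ₀ ∪ {∞}`, `M ↦ |M ∩ A|`. -/
noncomputable def NA {S : Type*} (A : Set S) (M : CS S) : ℕ∞ := (M.1 ∩ A).encard

/-- The counting σ-field `𝒞(𝒯)` on `C(S)`: the smallest σ-field making every
`N_A`, `A ∈ 𝒯`, measurable. -/
noncomputable def countingSigma {S : Type*} (T : Set (Set S)) : MeasurableSpace (CS S) :=
  ⨆ A ∈ T, MeasurableSpace.comap (NA A) ⊤

/-- The hit-or-miss σ-field `𝔥(ℰ)` on `C(S)`. -/
def hitOrMiss {S : Type*} (E : Set (Set S)) : MeasurableSpace (CS S) :=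
  MeasurableSpace.generateFrom ((fun A => {M : CS S | (M.1 ∩ A).Nonempty}) '' E)

/-- The counting σ-field `𝒞(𝒮)` of the full σ-field of the state space. -/
noncomputable def countingSigmaField (S : Type*) [MeasurableSpace S] : MeasurableSpace (CS S) :=
  countingSigma {A : Set S | MeasurableSet A}

open Set MeasurableSpace
open scoped ENNReal

/-!
The fdd sets form a π-system generating `𝒞(ℰ)`, so the laws of `π₁` and `π₂` agree on `𝒞(ℰ)`.
Take a cover `cₙ ∈ ℰ` along which `π₁` is locally finite and let `T` be the set of configurations
`M` with every `M ∩ cₙ` finite. Then `T ∈ 𝒞(ℰ)` carries all the mass of the first law, hence of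
the second one too. On `T`, every `N_B` with `B ∈ 𝒮` is `𝒞(ℰ)`-measurable: `B ↦ |M ∩ B ∩ cₙ|` is a
finite measure whose values on the π-system `ℰ` depend `𝒞(ℰ)`-measurably on `M`, hence so do its
values on `σ(ℰ) = 𝒮`, and `N_B` is the sum of these over the disjointed cover. So `𝒞(𝒮)` and
`𝒞(ℰ)` have the same trace on `T`, and a law carried by `T` is determined by its values on `𝒞(ℰ)`.
-/

lemma ENat.measurable_of_measurable_toENNReal {α : Type*} [MeasurableSpace α] {f : α → ℕ∞}
    (hf : Measurable fun x => (f x : ℝ≥0∞)) : Measurable f :=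
  measurable_to_countable' fun k => by
    simpa [preimage, ENat.toENNReal_inj] using hf (measurableSet_singleton (k : ℝ≥0∞))

theorem MeasureTheory.Measure.ext_of_conull_of_comap_val_le {X : Type*} {m₀ m : MeasurableSpace X}
    {T : Set X} (hT : MeasurableSet[m₀] T)
    (htrace : m.comap ((↑) : T → X) ≤ m₀.comap (↑)) {μ ν : Measure[m] X} (hμT : μ Tᶜ = 0)
    (h : ∀ s, MeasurableSet[m₀] s → μ s = ν s) : μ = ν := by
  have hνT : ν Tᶜ = 0 := h _ hT.compl ▸ hμT
  refine Measure.ext fun G hG => ?_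
  obtain ⟨G', hG', hGG'⟩ := htrace _ ⟨G, hG, rfl⟩
  have hinter : G ∩ T = G' ∩ T := by
    simpa [Subtype.preimage_coe_eq_preimage_coe_iff, inter_comm] using hGG'.symm
  rw [← measure_inter_conull hμT, ← measure_inter_conull hνT, hinter]
  exact h _ (hG'.inter hT)

namespace CS

variable {S : Type*}

lemma measurable_NA {E : Set (Set S)} {A : Set S} (hA : A ∈ E) :
    Measurable[countingSigma E] (NA A) :=
  Measurable.of_comap_le <| le_iSup₂ (f := fun A (_ : A ∈ E) => MeasurableSpace.comap (NA A) ⊤) A hA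

lemma countingSigma_mono {E F : Set (Set S)} (h : E ⊆ F) : countingSigma E ≤ countingSigma F :=
  biSup_mono h

def fddSets (E : Set (Set S)) : Set (Set (CS S)) :=
  {s | ∃ (n : ℕ) (A : Fin n → Set S) (k : Fin n → ℕ∞),
    (∀ i, A i ∈ E) ∧ s = {M | ∀ i, NA (A i) M = k i}}

lemma isPiSystem_fddSets (E : Set (Set S)) : IsPiSystem (fddSets E) := by
  rintro s ⟨n, A, k, hA, rfl⟩ t ⟨m, B, l, hB, rfl⟩ -
  refine ⟨n + m, Fin.append A B, Fin.append k l, ?_, ?_⟩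
  · simpa [Fin.forall_fin_add] using ⟨hA, hB⟩
  · ext M
    simp [Fin.forall_fin_add]

lemma generateFrom_fddSets (E : Set (Set S)) : generateFrom (fddSets E) = countingSigma E := by
  refine le_antisymm (generateFrom_le ?_) (iSup₂_le fun A hA => ?_)
  · rintro s ⟨n, A, k, hA, rfl⟩
    simpa only [ofPred_forall, preimage, mem_singleton_iff] using
      MeasurableSet.iInter fun i => measurable_NA (hA i) (measurableSet_singleton (k i))
  · rintro s ⟨V, -, rfl⟩
    rw [← biUnion_preimage_singleton]
    refine MeasurableSet.biUnion V.to_countable fun k _ => measurableSet_generateFrom ?_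
    exact ⟨1, fun _ => A, fun _ => k, fun _ => hA, by ext; simp⟩

def locallyFinite (c : ℕ → Set S) : Set (CS S) := {M | ∀ n, (M.1 ∩ c n).Finite}

lemma measurableSet_locallyFinite {E : Set (Set S)} {c : ℕ → Set S} (hc : ∀ n, c n ∈ E) :
    MeasurableSet[countingSigma E] (locallyFinite c) := by
  have : locallyFinite c = ⋂ n, (NA (c n) ⁻¹' {⊤})ᶜ := by
    ext M
    simp [locallyFinite, NA, encard_eq_top_iff]
  rw [this]
  exact .iInter fun n => (measurable_NA (hc n) (measurableSet_singleton ⊤)).compl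

lemma measure_preimage_eq_of_fdd {Ω : Type*} [MeasurableSpace Ω] (P : Measure Ω)
    [IsFiniteMeasure P] {E : Set (Set S)} {π₁ π₂ : Ω → CS S}
    (hm₁ : Measurable[_, countingSigma E] π₁) (hm₂ : Measurable[_, countingSigma E] π₂)
    (hfdd : ∀ (n : ℕ) (A : Fin n → Set S), (∀ i, A i ∈ E) → ∀ k : Fin n → ℕ∞,
      P {ω | ∀ i, NA (A i) (π₁ ω) = k i} = P {ω | ∀ i, NA (A i) (π₂ ω) = k i})
    {s : Set (CS S)} (hs : MeasurableSet[countingSigma E] s) : P (π₁ ⁻¹' s) = P (π₂ ⁻¹' s) := by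
  let : MeasurableSpace (CS S) := countingSigma E
  have hlaw : P.map π₁ = P.map π₂ := by
    refine ext_of_generate_finite _ (generateFrom_fddSets E).symm (isPiSystem_fddSets E) ?_
      (by simp [Measure.map_apply, hm₁, hm₂])
    intro t ht
    have htm : MeasurableSet t := (generateFrom_fddSets E).le _ (measurableSet_generateFrom ht)
    obtain ⟨n, A, k, hA, rfl⟩ := ht
    rw [Measure.map_apply hm₁ htm, Measure.map_apply hm₂ htm]
    exact hfdd n A hA k
  rw [← Measure.map_apply hm₁ hs, hlaw, Measure.map_apply hm₂ hs]

variable [MeasurableSpace S]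

noncomputable def countingMeasure (M : CS S) : Measure S :=
  Measure.sum fun x : M.1 => Measure.dirac (x : S)

lemma countingMeasure_apply (M : CS S) {B : Set S} (hB : MeasurableSet B) :
    countingMeasure M B = NA B M := by
  simp only [countingMeasure, Measure.sum_apply _ hB, Measure.dirac_apply' _ hB]
  rw [tsum_subtype M.1 (B.indicator 1), indicator_indicator, ← tsum_subtype]
  exact ENNReal.tsum_set_one _

lemma measurable_countingMeasure_restrict {E : Set (Set S)}
    (hstable : ∀ A ∈ E, ∀ B ∈ E, A ∩ B ∈ E) (hgen : generateFrom E = ‹MeasurableSpace S›)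
    {c : ℕ → Set S} (hc : ∀ n, c n ∈ E) (n : ℕ) :
    Measurable[(countingSigma E).comap ((↑) : locallyFinite c → CS S)]
      fun M => (countingMeasure M.1).restrict (c n) := by
  let : MeasurableSpace (CS S) := countingSigma E
  have hmeas : ∀ A ∈ E, MeasurableSet A := fun A hA => hgen ▸ measurableSet_generateFrom hA
  have hbasic : ∀ A ∈ E,
      Measurable fun M : locallyFinite c => (countingMeasure M.1).restrict (c n) A := fun A hA => by
      simp only [Measure.restrict_apply (hmeas A hA),
        countingMeasure_apply _ ((hmeas A hA).inter (hmeas _ (hc n)))]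
      exact measurable_of_countable _ |>.comp <|
        (measurable_NA (hstable _ hA _ (hc n))).comp measurable_subtype_coe
  have : ∀ M : locallyFinite c, IsFiniteMeasure ((countingMeasure M.1).restrict (c n)) := fun M =>
    ⟨by simpa [countingMeasure_apply _ (hmeas _ (hc n)), NA, encard_lt_top_iff] using M.2 n⟩
  exact .measure_of_isPiSystem hgen.symm (fun A hA B hB _ => hstable A hA B hB) hbasic
    (by simpa using hbasic _ (hc n))

lemma measurable_NA_comp_val_locallyFinite {E : Set (Set S)}
    (hstable : ∀ A ∈ E, ∀ B ∈ E, A ∩ B ∈ E) (hgen : generateFrom E = ‹MeasurableSpace S›)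
    {c : ℕ → Set S} (hc : ∀ n, c n ∈ E) (hcover : ⋃ n, c n = univ) {B : Set S}
    (hB : MeasurableSet B) :
    Measurable[(countingSigma E).comap ((↑) : locallyFinite c → CS S)] fun M => NA B M.1 := by
  let : MeasurableSpace (CS S) := countingSigma E
  have hmeas : ∀ n, MeasurableSet (c n) := fun n => hgen ▸ measurableSet_generateFrom (hc n)
  have hpieces : ∀ M : CS S, (NA B M : ℝ≥0∞) =
      ∑' n, (countingMeasure M).restrict (c n) (B ∩ disjointed c n) := by
    intro M
    have hunion : B = ⋃ n, B ∩ disjointed c n := by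
      rw [← inter_iUnion, iUnion_disjointed, hcover, inter_univ]
    rw [← countingMeasure_apply M hB]
    nth_rewrite 1 [hunion]
    have hdisj : Pairwise (Function.onFun Disjoint fun n => B ∩ disjointed c n) :=
      (disjoint_disjointed c).mono fun _ _ h => h.mono inter_subset_right inter_subset_right
    rw [measure_iUnion hdisj fun n => hB.inter (.disjointed hmeas n)]
    congr 1 with n
    rw [Measure.restrict_apply (hB.inter (.disjointed hmeas n)), inter_assoc,
      inter_eq_left.2 (disjointed_subset c n)]
  refine ENat.measurable_of_measurable_toENNReal ?_
  simp only [hpieces]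
  exact .tsum fun n => (Measure.measurable_coe (hB.inter (.disjointed hmeas n))).comp
    (measurable_countingMeasure_restrict hstable hgen hc n)

lemma comap_val_countingSigmaField_le {E : Set (Set S)}
    (hstable : ∀ A ∈ E, ∀ B ∈ E, A ∩ B ∈ E) (hgen : generateFrom E = ‹MeasurableSpace S›)
    {c : ℕ → Set S} (hc : ∀ n, c n ∈ E) (hcover : ⋃ n, c n = univ) :
    (countingSigmaField S).comap ((↑) : locallyFinite c → CS S) ≤
      (countingSigma E).comap ((↑) : locallyFinite c → CS S) := by
  rw [countingSigmaField, countingSigma]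
  simp only [MeasurableSpace.comap_iSup, MeasurableSpace.comap_comp]
  exact iSup₂_le fun B hB =>
    (measurable_NA_comp_val_locallyFinite hstable hgen hc hcover hB).comap_le

end CS

open CS in
theorem uniqueness_sigmaFinite_fdd_general {Ω S : Type*} [MeasurableSpace Ω] [MeasurableSpace S]
    (P : Measure Ω) [IsProbabilityMeasure P]
    (E : Set (Set S))
    (hstable : ∀ A ∈ E, ∀ B ∈ E, A ∩ B ∈ E)
    (hgen : MeasurableSpace.generateFrom E = ‹MeasurableSpace S›)
    (π₁ π₂ : Ω → CS S)
    (hm₁ : @Measurable Ω (CS S) _ (countingSigmaField S) π₁)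
    (hm₂ : @Measurable Ω (CS S) _ (countingSigmaField S) π₂)
    (hsf₁ : ∃ A : ℕ → Set S, (∀ n, A n ∈ E) ∧ (⋃ n, A n) = Set.univ ∧
      ∀ ω n, ((π₁ ω).1 ∩ A n).Finite)
    (hfdd : ∀ (n : ℕ) (A : Fin n → Set S), (∀ i, A i ∈ E) → ∀ k : Fin n → ℕ∞,
      P {ω | ∀ i, NA (A i) (π₁ ω) = k i} = P {ω | ∀ i, NA (A i) (π₂ ω) = k i}) :
    @Measure.map Ω (CS S) _ (countingSigmaField S) π₁ P =
      @Measure.map Ω (CS S) _ (countingSigmaField S) π₂ P := by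
  let : MeasurableSpace (CS S) := countingSigmaField S
  obtain ⟨c, hc, hcover, hfin⟩ := hsf₁
  have hle : countingSigma E ≤ countingSigmaField S :=
    countingSigma_mono fun A hA => hgen ▸ measurableSet_generateFrom hA
  have hlaw : ∀ s, MeasurableSet[countingSigma E] s → P.map π₁ s = P.map π₂ s := fun s hs => by
    rw [Measure.map_apply hm₁ (hle _ hs), Measure.map_apply hm₂ (hle _ hs)]
    exact measure_preimage_eq_of_fdd P (hm₁.mono le_rfl hle) (hm₂.mono le_rfl hle) hfdd hs
  refine Measure.ext_of_conull_of_comap_val_le (measurableSet_locallyFinite hc)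
    (comap_val_countingSigmaField_le hstable hgen hc hcover) ?_ hlaw
  rw [Measure.map_apply hm₁ (hle _ (measurableSet_locallyFinite hc).compl)]
  simp [locallyFinite, hfin]

theorem uniqueness_sigmaFinite_fdd {Ω S : Type*} [MeasurableSpace Ω] [MeasurableSpace S]
    (P : Measure Ω) [IsProbabilityMeasure P]
    (E : Set (Set S))
    (hstable : ∀ A ∈ E, ∀ B ∈ E, A ∩ B ∈ E)
    (hgen : MeasurableSpace.generateFrom E = ‹MeasurableSpace S›)
    (π₁ π₂ : Ω → CS S)
    (hm₁ : @Measurable Ω (CS S) _ (countingSigmaField S) π₁)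
    (hm₂ : @Measurable Ω (CS S) _ (countingSigmaField S) π₂)
    (hsf₁ : ∃ A : ℕ → Set S, (∀ n, A n ∈ E) ∧ (⋃ n, A n) = Set.univ ∧
      ∀ ω n, ((π₁ ω).1 ∩ A n).Finite)
    (hsf₂ : ∃ A : ℕ → Set S, (∀ n, A n ∈ E) ∧ (⋃ n, A n) = Set.univ ∧
      ∀ ω n, ((π₂ ω).1 ∩ A n).Finite)
    (hfdd : ∀ (n : ℕ) (A : Fin n → Set S), (∀ i, A i ∈ E) → ∀ k : Fin n → ℕ∞,
      P {ω | ∀ i, NA (A i) (π₁ ω) = k i} = P {ω | ∀ i, NA (A i) (π₂ ω) = k i}) :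
    @Measure.map Ω (CS S) _ (countingSigmaField S) π₁ P =
      @Measure.map Ω (CS S) _ (countingSigmaField S) π₂ P :=
  uniqueness_sigmaFinite_fdd_general P E hstable hgen π₁ π₂ hm₁ hm₂ hsf₁ hfdd
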